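/- arXiv:1202.5502 — 2 statements merged into one kernel-verified Lean document; each statement's English description precedes it below -/
import Mathlib

section
/- Let (X, x₀) be a compact Hausdorff based space, H a complex Hilbert space, and ζ : H ⊕ H ≃ H a linear isometric isomorphism. For F₁, F₂ ∈ 𝔠(X) define (F₁ · F₂)(f) := ζ ∘ (F₁(f) ⊕ F₂(f)) ∘ ζ⁻¹. Then: (1) F₁ · F₂ is again a (not necessarily unital) star-algebra homomorphism C₀(X) → B(H), and if rank(F₁ f) ≤ n₁ and rank(F₂ f) ≤ n₂ for all f then rank((F₁·F₂) f) ≤ n₁ + n₂ for all f, so F₁ · F₂ ∈ 𝔠(X); (2) the product map 𝔠(X) × 𝔠(X) → 𝔠(X), (F₁, F₂) ↦ F₁ · F₂, is continuous; (3) if u is a unitary representation of a group G on H acting on X by based homeomorphisms and on 𝔠(X) by (g·F)(f) = u(g) ∘ F(x ↦ f(g • x)) ∘ u(g)⁻¹, and ζ is G-equivariant for the diagonal action on H ⊕ H, then g·(F₁ · F₂) = (g·F₁) · (g·F₂) for all g ∈ G. -/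
set_option synthInstance.maxHeartbeats 400000

noncomputable section

/-- The non-unital star subalgebra `C₀(X)` of `C(X, ℂ)` consisting of the continuous functions
vanishing at the basepoint `x₀`. -/
def zeroAt (X : Type*) [TopologicalSpace X] (x₀ : X) :
    NonUnitalStarSubalgebra ℂ C(X, ℂ) where
  carrier := {f | f x₀ = 0}
  add_mem' := by intro f g hf hg; simp_all [Set.mem_setOf_eq]
  zero_mem' := by simp
  mul_mem' := by intro f g hf hg; simp_all [Set.mem_setOf_eq]
  smul_mem' := by intro c f hf; simp_all [Set.mem_setOf_eq]
  star_mem' := by intro f hf; simp_all [Set.mem_setOf_eq]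

/-- `C₀(X)` for the based space `(X, x₀)`, with the sup-norm (compact-open) topology inherited
from `C(X, ℂ)`. -/
abbrev CZero (X : Type*) [TopologicalSpace X] (x₀ : X) : Type _ := ↥(zeroAt X x₀)

variable (H : Type*) [NormedAddCommGroup H] [InnerProductSpace ℂ H] [CompleteSpace H]

/-- A continuous map `F : C₀(X) → B(H)` (with `B(H)` carrying the weak operator topology) is a
*configuration* if it is a (not necessarily unital) star-algebra homomorphism of uniformly
bounded finite rank. -/
def IsConfig {X : Type*} [TopologicalSpace X] {x₀ : X}
    (F : C(CZero X x₀, H →WOT[ℂ] H)) : Prop :=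
  ∃ Φ : CZero X x₀ →⋆ₙₐ[ℂ] (H →L[ℂ] H),
    (∀ f, F f = ContinuousLinearMapWOT.ofCLM (Φ f)) ∧
    ∃ n : ℕ, ∀ f, ∃ V : Submodule ℂ H, FiniteDimensional ℂ V ∧
      Module.finrank ℂ V ≤ n ∧ LinearMap.range ((Φ f) : H →ₗ[ℂ] H) ≤ V

/-- The configuration space `𝔠(X)`: bounded-rank star-algebra homomorphisms
`C₀(X) → B(H)`, topologized as a subspace of `C(C₀(X), B(H))` with the compact-open topology,
`B(H)` carrying the weak operator topology. -/
def Config (X : Type*) [TopologicalSpace X] (x₀ : X) : Type _ :=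
  {F : C(CZero X x₀, H →WOT[ℂ] H) // IsConfig H F}

instance (X : Type*) [TopologicalSpace X] (x₀ : X) : TopologicalSpace (Config H X x₀) :=
  instTopologicalSpaceSubtype

/-- Pullback of functions vanishing at basepoints along a based continuous map. -/
def pullback {X Y : Type*} [TopologicalSpace X] [TopologicalSpace Y] {x₀ : X} {y₀ : Y}
    (φ : C(X, Y)) (hφ : φ x₀ = y₀) (f : CZero Y y₀) : CZero X x₀ :=
  ⟨(f : C(Y, ℂ)).comp φ, by
    have hf : (f : C(Y, ℂ)) y₀ = 0 := f.2
    show ((f : C(Y, ℂ)).comp φ) x₀ = 0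
    simp [ContinuousMap.comp_apply, hφ, hf]⟩

/-- The conjugation action of `g : G` on (underlying functions of) configurations:
`(g·F)(f) = u g ∘ F (x ↦ f (g • x)) ∘ u g⁻¹`. -/
def smulConf {G : Type*} [Group G] {X : Type*} [TopologicalSpace X] {x₀ : X}
    [MulAction G X] [ContinuousConstSMul G X]
    (u : G →* (H ≃ₗᵢ[ℂ] H)) (hfix : ∀ g : G, g • x₀ = x₀) (g : G)
    (F : CZero X x₀ → (H →WOT[ℂ] H)) : CZero X x₀ → (H →WOT[ℂ] H) := fun f =>
  ContinuousLinearMapWOT.ofCLM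
    ((((u g).toContinuousLinearEquiv : H →L[ℂ] H)).comp
      (((ContinuousLinearMapWOT.toCLM
          (F (pullback ⟨fun y => g • y, continuous_const_smul g⟩ (hfix g) f)))).comp
        (((u g⁻¹).toContinuousLinearEquiv : H →L[ℂ] H))))

/-- The direct sum `S ⊕ T` of two operators on `H`, as an operator on `H ⊕ H = WithLp 2 (H × H)`. -/
def dsumOp (S T : H →L[ℂ] H) : WithLp 2 (H × H) →L[ℂ] WithLp 2 (H × H) :=
  (((WithLp.prodContinuousLinearEquiv 2 ℂ H H).symm : (H × H) →L[ℂ] WithLp 2 (H × H))).comp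
    ((S.prodMap T).comp
      ((WithLp.prodContinuousLinearEquiv 2 ℂ H H : WithLp 2 (H × H) →L[ℂ] H × H)))

/-- The internal direct sum `ζ ∘ (S ⊕ T) ∘ ζ⁻¹` of two operators on `H`, along an isometric
isomorphism `ζ : H ⊕ H ≃ H`. -/
def internalSum (ζ : WithLp 2 (H × H) ≃ₗᵢ[ℂ] H) (S T : H →L[ℂ] H) : H →L[ℂ] H :=
  ((ζ.toContinuousLinearEquiv : WithLp 2 (H × H) →L[ℂ] H)).comp
    ((dsumOp H S T).comp
      ((ζ.symm.toContinuousLinearEquiv : H →L[ℂ] WithLp 2 (H × H))))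

/-- The Pontryagin (H-space) product `(F₁ · F₂)(f) = ζ ∘ (F₁ f ⊕ F₂ f) ∘ ζ⁻¹` on
configurations. -/
def prodConf {X : Type*} [TopologicalSpace X] {x₀ : X} (ζ : WithLp 2 (H × H) ≃ₗᵢ[ℂ] H)
    (F₁ F₂ : CZero X x₀ → (H →WOT[ℂ] H)) : CZero X x₀ → (H →WOT[ℂ] H) := fun f =>
  ContinuousLinearMapWOT.ofCLM
    (internalSum H ζ (ContinuousLinearMapWOT.toCLM (F₁ f))
      (ContinuousLinearMapWOT.toCLM (F₂ f)))

set_option linter.unusedSectionVars false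
set_option maxHeartbeats 1000000
section Helpers
variable (ζ : WithLp 2 (H × H) ≃ₗᵢ[ℂ] H)

abbrev eps : WithLp 2 (H × H) ≃L[ℂ] H × H := WithLp.prodContinuousLinearEquiv 2 ℂ H H

lemma internalSum_apply (S T : H →L[ℂ] H) (x : H) :
    internalSum H ζ S T x
      = ζ ((eps H).symm (S ((eps H) (ζ.symm x)).1, T ((eps H) (ζ.symm x)).2)) := rfl

lemma isum_add (S S' T T' : H →L[ℂ] H) :
    internalSum H ζ (S + S') (T + T') = internalSum H ζ S T + internalSum H ζ S' T' := by
  ext x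
  rw [ContinuousLinearMap.add_apply, internalSum_apply, internalSum_apply, internalSum_apply,
    ContinuousLinearMap.add_apply, ContinuousLinearMap.add_apply, ← Prod.mk_add_mk,
    map_add, map_add]

lemma isum_smul (c : ℂ) (S T : H →L[ℂ] H) :
    internalSum H ζ (c • S) (c • T) = c • internalSum H ζ S T := by
  ext x
  rw [ContinuousLinearMap.smul_apply, internalSum_apply, internalSum_apply,
    ContinuousLinearMap.smul_apply, ContinuousLinearMap.smul_apply, ← Prod.smul_mk,
    map_smul, map_smul]

lemma isum_zero : internalSum H ζ 0 0 = 0 := by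
  ext x
  rw [internalSum_apply, ContinuousLinearMap.zero_apply, ContinuousLinearMap.zero_apply,
    ContinuousLinearMap.zero_apply]
  have h : ((0 : H), (0 : H)) = (0 : H × H) := rfl
  rw [h, map_zero, map_zero]

lemma isum_mul (S S' T T' : H →L[ℂ] H) :
    internalSum H ζ (S * S') (T * T') = internalSum H ζ S T * internalSum H ζ S' T' := by
  ext x
  rw [ContinuousLinearMap.mul_apply, internalSum_apply, internalSum_apply, internalSum_apply,
    ζ.symm_apply_apply]
  simp only [ContinuousLinearEquiv.apply_symm_apply, ContinuousLinearMap.mul_apply]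

lemma isum_star (S T : H →L[ℂ] H) :
    internalSum H ζ (star S) (star T) = star (internalSum H ζ S T) := by
  rw [ContinuousLinearMap.star_eq_adjoint, ContinuousLinearMap.star_eq_adjoint,
    ContinuousLinearMap.star_eq_adjoint, ContinuousLinearMap.eq_adjoint_iff]
  intro x y
  rw [internalSum_apply]
  nth_rewrite 1 [← ζ.apply_symm_apply y]
  rw [ζ.inner_map_map, internalSum_apply]
  nth_rewrite 3 [← ζ.apply_symm_apply x]
  rw [ζ.inner_map_map]
  rw [WithLp.prod_inner_apply, WithLp.prod_inner_apply]
  have hf : ∀ v : H × H, ((eps H).symm v).ofLp.1 = v.1 := fun _ => rfl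
  have hs : ∀ v : H × H, ((eps H).symm v).ofLp.2 = v.2 := fun _ => rfl
  rw [hf, hs, hf, hs, ContinuousLinearMap.adjoint_inner_left,
    ContinuousLinearMap.adjoint_inner_left]
  rfl

/-- Left inclusion `H → H` through the internal sum, as a linear map. -/
def Lleft : H →ₗ[ℂ] H :=
  (ζ.toLinearEquiv.toLinearMap.comp (WithLp.linearEquiv 2 ℂ (H × H)).symm.toLinearMap).comp
    (LinearMap.inl ℂ H H)

def Lright : H →ₗ[ℂ] H :=
  (ζ.toLinearEquiv.toLinearMap.comp (WithLp.linearEquiv 2 ℂ (H × H)).symm.toLinearMap).comp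
    (LinearMap.inr ℂ H H)

lemma isum_eq_Lleft_add_Lright (S T : H →L[ℂ] H) (x : H) :
    internalSum H ζ S T x
      = Lleft H ζ (S ((eps H) (ζ.symm x)).1) + Lright H ζ (T ((eps H) (ζ.symm x)).2) := by
  rw [internalSum_apply]
  have : (S ((eps H) (ζ.symm x)).1, T ((eps H) (ζ.symm x)).2)
      = ((S ((eps H) (ζ.symm x)).1, 0) : H × H) + (0, T ((eps H) (ζ.symm x)).2) := by
    simp
  rw [this, map_add, map_add]
  rfl

lemma isum_rank {n₁ n₂ : ℕ} {S T : H →L[ℂ] H} {V₁ V₂ : Submodule ℂ H}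
    (h₁ : FiniteDimensional ℂ V₁) (h₂ : FiniteDimensional ℂ V₂)
    (hn₁ : Module.finrank ℂ V₁ ≤ n₁) (hn₂ : Module.finrank ℂ V₂ ≤ n₂)
    (hr₁ : LinearMap.range (S : H →ₗ[ℂ] H) ≤ V₁)
    (hr₂ : LinearMap.range (T : H →ₗ[ℂ] H) ≤ V₂) :
    ∃ V : Submodule ℂ H, FiniteDimensional ℂ V ∧ Module.finrank ℂ V ≤ n₁ + n₂ ∧
      LinearMap.range ((internalSum H ζ S T) : H →ₗ[ℂ] H) ≤ V := by
  refine ⟨V₁.map (Lleft H ζ) ⊔ V₂.map (Lright H ζ), inferInstance, ?_, ?_⟩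
  · calc Module.finrank ℂ ↥(V₁.map (Lleft H ζ) ⊔ V₂.map (Lright H ζ))
        ≤ Module.finrank ℂ (V₁.map (Lleft H ζ)) + Module.finrank ℂ (V₂.map (Lright H ζ)) := by
          exact Submodule.finrank_add_le_finrank_add_finrank _ _
      _ ≤ n₁ + n₂ := by
          gcongr
          · exact le_trans (Submodule.finrank_map_le _ _) hn₁
          · exact le_trans (Submodule.finrank_map_le _ _) hn₂
  · rintro x ⟨v, rfl⟩
    rw [ContinuousLinearMap.coe_coe, isum_eq_Lleft_add_Lright]
    exact Submodule.add_mem _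
      (Submodule.mem_sup_left (Submodule.mem_map_of_mem (hr₁ ⟨_, rfl⟩)))
      (Submodule.mem_sup_right (Submodule.mem_map_of_mem (hr₂ ⟨_, rfl⟩)))

variable {X : Type*} [TopologicalSpace X] {x₀ : X}

/-- The internal-sum of two star homs is a star hom. -/
def isumHom (Φ₁ Φ₂ : CZero X x₀ →⋆ₙₐ[ℂ] (H →L[ℂ] H)) : CZero X x₀ →⋆ₙₐ[ℂ] (H →L[ℂ] H) where
  toFun f := internalSum H ζ (Φ₁ f) (Φ₂ f)
  map_add' f g := by
    rw [map_add, map_add, isum_add]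
  map_smul' c f := by
    rw [map_smul, map_smul, isum_smul]; rfl
  map_zero' := by
    rw [map_zero, map_zero, isum_zero]
  map_mul' f g := by
    rw [map_mul, map_mul, isum_mul]
  map_star' f := by
    rw [map_star, map_star, isum_star]

/-- The internal sum on WOT operators (left slot). -/
def isumWOTleft : (H →WOT[ℂ] H) → (H →WOT[ℂ] H) := fun S =>
  ContinuousLinearMapWOT.ofCLM
    (internalSum H ζ (ContinuousLinearMapWOT.toCLM S) 0)

def isumWOTright : (H →WOT[ℂ] H) → (H →WOT[ℂ] H) := fun T =>
  ContinuousLinearMapWOT.ofCLM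
    (internalSum H ζ 0 (ContinuousLinearMapWOT.toCLM T))

lemma cont_isumWOTleft : Continuous (isumWOTleft H ζ) := by
  refine ContinuousLinearMapWOT.continuous_of_dual_apply_continuous fun x y => ?_
  exact ContinuousLinearMapWOT.continuous_dual_apply (𝕜₁ := ℂ) (𝕜₂ := ℂ) (E := H) (F := H)
    (((eps H) (ζ.symm x)).1)
    (y.comp ((ζ.toContinuousLinearEquiv : WithLp 2 (H × H) →L[ℂ] H).comp
      ((((eps H).symm : (H × H) ≃L[ℂ] WithLp 2 (H × H)) :
          (H × H) →L[ℂ] WithLp 2 (H × H)).comp (ContinuousLinearMap.inl ℂ H H))))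

lemma cont_isumWOTright : Continuous (isumWOTright H ζ) := by
  refine ContinuousLinearMapWOT.continuous_of_dual_apply_continuous fun x y => ?_
  exact ContinuousLinearMapWOT.continuous_dual_apply (𝕜₁ := ℂ) (𝕜₂ := ℂ) (E := H) (F := H)
    (((eps H) (ζ.symm x)).2)
    (y.comp ((ζ.toContinuousLinearEquiv : WithLp 2 (H × H) →L[ℂ] H).comp
      ((((eps H).symm : (H × H) ≃L[ℂ] WithLp 2 (H × H)) :
          (H × H) →L[ℂ] WithLp 2 (H × H)).comp (ContinuousLinearMap.inr ℂ H H))))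

lemma isum_decomp (S T : H →L[ℂ] H) :
    internalSum H ζ S T = internalSum H ζ S 0 + internalSum H ζ 0 T := by
  rw [← isum_add]
  rw [add_zero, zero_add]

lemma toWOT_isum_decomp (S T : H →WOT[ℂ] H) :
    ContinuousLinearMapWOT.ofCLM
        (internalSum H ζ (ContinuousLinearMapWOT.toCLM S)
          (ContinuousLinearMapWOT.toCLM T))
      = isumWOTleft H ζ S + isumWOTright H ζ T := by
  rw [isum_decomp, ContinuousLinearMapWOT.ofCLM_add]; rfl

/-- Conjugation commutes with the internal sum if `ζ` is equivariant. -/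
lemma isum_conj {G : Type*} [Group G] (u : G →* (H ≃ₗᵢ[ℂ] H))
    (hζ : ∀ (g : G) (w : WithLp 2 (H × H)),
        u g (ζ w) = ζ ((eps H).symm (u g ((eps H) w).1, u g ((eps H) w).2)))
    (g : G) (S T : H →L[ℂ] H) :
    (((u g).toContinuousLinearEquiv : H →L[ℂ] H)).comp
        ((internalSum H ζ S T).comp (((u g⁻¹).toContinuousLinearEquiv : H →L[ℂ] H)))
      = internalSum H ζ
          ((((u g).toContinuousLinearEquiv : H →L[ℂ] H)).comp
            (S.comp (((u g⁻¹).toContinuousLinearEquiv : H →L[ℂ] H))))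
          ((((u g).toContinuousLinearEquiv : H →L[ℂ] H)).comp
            (T.comp (((u g⁻¹).toContinuousLinearEquiv : H →L[ℂ] H)))) := by
  ext x
  have key : ζ.symm ((u g⁻¹) x)
      = (eps H).symm ((u g⁻¹) ((eps H) (ζ.symm x)).1, (u g⁻¹) ((eps H) (ζ.symm x)).2) := by
    have := hζ g⁻¹ (ζ.symm x)
    rw [ζ.apply_symm_apply] at this
    rw [this, ζ.symm_apply_apply]
  show (u g) (internalSum H ζ S T ((u g⁻¹) x)) = _
  rw [internalSum_apply, hζ g, internalSum_apply]
  simp only [ContinuousLinearEquiv.apply_symm_apply, key]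
  rfl

/-- Bundled left WOT internal sum. -/
def isumWOTleftCM : C(H →WOT[ℂ] H, H →WOT[ℂ] H) := ⟨isumWOTleft H ζ, cont_isumWOTleft H ζ⟩
def isumWOTrightCM : C(H →WOT[ℂ] H, H →WOT[ℂ] H) := ⟨isumWOTright H ζ, cont_isumWOTright H ζ⟩

lemma isConfig_mul (F₁ F₂ : C(CZero X x₀, H →WOT[ℂ] H)) (h₁ : IsConfig H F₁)
    (h₂ : IsConfig H F₂) :
    IsConfig H ((isumWOTleftCM H ζ).comp F₁ + (isumWOTrightCM H ζ).comp F₂) := by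
  obtain ⟨Φ₁, hΦ₁, n₁, hn₁⟩ := h₁
  obtain ⟨Φ₂, hΦ₂, n₂, hn₂⟩ := h₂
  refine ⟨isumHom H ζ Φ₁ Φ₂, fun f => ?_, n₁ + n₂, fun f => ?_⟩
  · show isumWOTleft H ζ (F₁ f) + isumWOTright H ζ (F₂ f) = _
    rw [hΦ₁ f, hΦ₂ f, ← toWOT_isum_decomp, ContinuousLinearMapWOT.toCLM_ofCLM,
      ContinuousLinearMapWOT.toCLM_ofCLM]
    rfl
  · obtain ⟨V₁, a₁, b₁, c₁⟩ := hn₁ f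
    obtain ⟨V₂, a₂, b₂, c₂⟩ := hn₂ f
    exact isum_rank H ζ a₁ a₂ b₁ b₂ c₁ c₂
end Helpers

/-- The internal direct sum `(F₁ · F₂)(f) = ζ ∘ (F₁ f ⊕ F₂ f) ∘ ζ⁻¹` makes the
configuration space an H-space: (1) it sends star homomorphisms to star homomorphisms and ranks
add, (2) the product `𝔠(X) × 𝔠(X) → 𝔠(X)` is well defined and continuous, and (3) it is
equivariant for the conjugation `G`-action when `ζ` is `G`-equivariant for the diagonal action. -/
theorem stmt9
    {X : Type*} [TopologicalSpace X] [CompactSpace X] [T2Space X] {x₀ : X}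
    (H : Type*) [NormedAddCommGroup H] [InnerProductSpace ℂ H] [CompleteSpace H]
    (ζ : WithLp 2 (H × H) ≃ₗᵢ[ℂ] H)
    {G : Type*} [Group G] [MulAction G X] [ContinuousConstSMul G X]
    (hfix : ∀ g : G, g • x₀ = x₀)
    (u : G →* (H ≃ₗᵢ[ℂ] H)) :
    -- (1) the product of star homomorphisms is a star homomorphism …
    (∀ Φ₁ Φ₂ : CZero X x₀ →⋆ₙₐ[ℂ] (H →L[ℂ] H),
      ∃ Ψ : CZero X x₀ →⋆ₙₐ[ℂ] (H →L[ℂ] H),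
        ∀ f, Ψ f = internalSum H ζ (Φ₁ f) (Φ₂ f)) ∧
    -- … and ranks add
    (∀ (F₁ F₂ : CZero X x₀ → (H →L[ℂ] H)) (n₁ n₂ : ℕ),
      (∀ f, ∃ V₁ : Submodule ℂ H, FiniteDimensional ℂ V₁ ∧ Module.finrank ℂ V₁ ≤ n₁ ∧
        LinearMap.range ((F₁ f) : H →ₗ[ℂ] H) ≤ V₁) →
      (∀ f, ∃ V₂ : Submodule ℂ H, FiniteDimensional ℂ V₂ ∧ Module.finrank ℂ V₂ ≤ n₂ ∧
        LinearMap.range ((F₂ f) : H →ₗ[ℂ] H) ≤ V₂) →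
      (∀ f, ∃ V : Submodule ℂ H, FiniteDimensional ℂ V ∧ Module.finrank ℂ V ≤ n₁ + n₂ ∧
        LinearMap.range ((internalSum H ζ (F₁ f) (F₂ f)) : H →ₗ[ℂ] H) ≤ V)) ∧
    -- (2) the product map `𝔠(X) × 𝔠(X) → 𝔠(X)` is well defined and continuous
    (∃ μ : Config H X x₀ × Config H X x₀ → Config H X x₀,
      Continuous μ ∧
      ∀ (F₁ F₂ : Config H X x₀) (f : CZero X x₀),
        (μ (F₁, F₂)).1 f = prodConf H ζ (⇑F₁.1) (⇑F₂.1) f) ∧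
    -- (3) if `ζ` is `G`-equivariant for the diagonal action on `H ⊕ H`, the product is
    -- `G`-equivariant
    ((∀ (g : G) (w : WithLp 2 (H × H)),
        u g (ζ w) = ζ ((WithLp.prodContinuousLinearEquiv 2 ℂ H H).symm
          (u g ((WithLp.prodContinuousLinearEquiv 2 ℂ H H) w).1,
           u g ((WithLp.prodContinuousLinearEquiv 2 ℂ H H) w).2))) →
      ∀ (g : G) (F₁ F₂ : CZero X x₀ → (H →WOT[ℂ] H)),
        smulConf H u hfix g (prodConf H ζ F₁ F₂)
          = prodConf H ζ (smulConf H u hfix g F₁) (smulConf H u hfix g F₂)) := by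
  refine ⟨?_, ?_, ?_, ?_⟩
  · intro Φ₁ Φ₂
    exact ⟨isumHom H ζ Φ₁ Φ₂, fun f => rfl⟩
  · intro F₁ F₂ n₁ n₂ h₁ h₂ f
    obtain ⟨V₁, a₁, b₁, c₁⟩ := h₁ f
    obtain ⟨V₂, a₂, b₂, c₂⟩ := h₂ f
    exact isum_rank H ζ a₁ a₂ b₁ b₂ c₁ c₂
  · refine ⟨fun p => ⟨(isumWOTleftCM H ζ).comp p.1.1 + (isumWOTrightCM H ζ).comp p.2.1,
      isConfig_mul H ζ _ _ p.1.2 p.2.2⟩, ?_, ?_⟩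
    · refine Continuous.subtype_mk ?_ _
      exact (((isumWOTleftCM H ζ).continuous_postcomp).comp
          (continuous_subtype_val.comp continuous_fst)).add
        (((isumWOTrightCM H ζ).continuous_postcomp).comp
          (continuous_subtype_val.comp continuous_snd))
    · intro F₁ F₂ f
      show isumWOTleft H ζ (F₁.1 f) + isumWOTright H ζ (F₂.1 f) = _
      rw [← toWOT_isum_decomp]
      rfl
  · intro hζ g F₁ F₂
    funext f
    show ContinuousLinearMapWOT.ofCLM _ = ContinuousLinearMapWOT.ofCLM _
    unfold prodConf
    rw [ContinuousLinearMapWOT.toCLM_ofCLM]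
    congr 1
    unfold smulConf
    rw [ContinuousLinearMapWOT.toCLM_ofCLM, ContinuousLinearMapWOT.toCLM_ofCLM]
    exact isum_conj H ζ u hζ g _ _

end
end

section
/- Let (X, x₀) and (Y, y₀) be compact Hausdorff based spaces and H a complex Hilbert space. Consider the product non-unital star algebra C₀(X) × C₀(Y) (which is star-isomorphic to C₀(X ∨ Y)). Then the map sending a bounded-rank (not necessarily unital) star-algebra homomorphism F : C₀(X) × C₀(Y) → B(H) to the pair (F₁, F₂), where F₁(f) := F(f, 0) and F₂(g) := F(0, g), is a homeomorphism from the space of such homomorphisms (topologized as a subspace of continuous maps with the compact-open topology, B(H) carrying the weak operator topology) onto the subspace of pairs (F₁, F₂) ∈ 𝔠(X) × 𝔠(Y) satisfying F₁(f) F₂(g) = 0, F₂(g) F₁(f) = 0, F₁(f)* F₂(g) = 0 and F₁(f) F₂(g)* = 0 for all f ∈ C₀(X), g ∈ C₀(Y); its inverse sends (F₁, F₂) to (f, g) ↦ F₁(f) + F₂(g). -/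
set_option synthInstance.maxHeartbeats 400000

noncomputable section

variable (H : Type*) [NormedAddCommGroup H] [InnerProductSpace ℂ H] [CompleteSpace H]

/-- A continuous map `F : C₀(X) × C₀(Y) → B(H)` is a configuration if it is a (not necessarily
unital) star-algebra homomorphism of uniformly bounded finite rank from the product star
algebra `C₀(X) × C₀(Y)` (which is star-isomorphic to `C₀(X ∨ Y)`). -/
def IsConfigProd {X Y : Type*} [TopologicalSpace X] [TopologicalSpace Y] {x₀ : X} {y₀ : Y}
    (F : C(CZero X x₀ × CZero Y y₀, H →WOT[ℂ] H)) : Prop :=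
  ∃ Φ : (CZero X x₀ × CZero Y y₀) →⋆ₙₐ[ℂ] (H →L[ℂ] H),
    (∀ fg, F fg = ContinuousLinearMapWOT.ofCLM (Φ fg)) ∧
    ∃ n : ℕ, ∀ fg, ∃ V : Submodule ℂ H, FiniteDimensional ℂ V ∧
      Module.finrank ℂ V ≤ n ∧ LinearMap.range ((Φ fg) : H →ₗ[ℂ] H) ≤ V

/-- The mutual orthogonality conditions on a pair of configurations:
`F₁ f · F₂ g = 0`, `F₂ g · F₁ f = 0`, `(F₁ f)⋆ · F₂ g = 0` and `F₁ f · (F₂ g)⋆ = 0`. -/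
def orthPair {X Y : Type*} [TopologicalSpace X] [TopologicalSpace Y] {x₀ : X} {y₀ : Y}
    (p : Config H X x₀ × Config H Y y₀) : Prop :=
  ∀ (f : CZero X x₀) (g : CZero Y y₀),
    ContinuousLinearMapWOT.toCLM (p.1.1 f) *
        ContinuousLinearMapWOT.toCLM (p.2.1 g) = 0 ∧
    ContinuousLinearMapWOT.toCLM (p.2.1 g) *
        ContinuousLinearMapWOT.toCLM (p.1.1 f) = 0 ∧
    star (ContinuousLinearMapWOT.toCLM (p.1.1 f)) *
        ContinuousLinearMapWOT.toCLM (p.2.1 g) = 0 ∧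
    ContinuousLinearMapWOT.toCLM (p.1.1 f) *
        star (ContinuousLinearMapWOT.toCLM (p.2.1 g)) = 0

/-!
A star homomorphism `Φ` on `A × B` is the sum of its restrictions `Φ₁ = Φ(·, 0)` and
`Φ₂ = Φ(0, ·)`, because `(a, b) = (a, 0) + (0, b)`; these restrictions annihilate each other
(also after taking adjoints) because `(a, 0) (0, b) = 0`. Conversely, if `Φ₁ a Φ₂ b = 0` and
`Φ₂ b Φ₁ a = 0`, then `(a, b) ↦ Φ₁ a + Φ₂ b` is multiplicative since the cross terms vanish, and
its rank is at most the sum of the ranks. Both directions are built from precomposition and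
pointwise addition, which are continuous for the compact-open topology.
-/

namespace LinearMap

variable {K V W : Type*} [DivisionRing K] [AddCommGroup V] [Module K V] [AddCommGroup W]
  [Module K W]

def HasRankLE (f : V →ₗ[K] W) (n : ℕ) : Prop :=
  ∃ U : Submodule K W, FiniteDimensional K U ∧ Module.finrank K U ≤ n ∧ range f ≤ U

theorem HasRankLE.add {f g : V →ₗ[K] W} {m n : ℕ} (hf : f.HasRankLE m) (hg : g.HasRankLE n) :
    (f + g).HasRankLE (m + n) := by
  obtain ⟨U, _, hUm, hfU⟩ := hf
  obtain ⟨U', _, hU'n, hgU'⟩ := hg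
  exact ⟨U ⊔ U', inferInstance,
    (Submodule.finrank_add_le_finrank_add_finrank U U').trans (add_le_add hUm hU'n),
    (range_add_le f g).trans (sup_le_sup hfU hgU')⟩

end LinearMap

namespace NonUnitalStarAlgHom

variable {R A B C : Type*} [Monoid R] [NonUnitalNonAssocSemiring A] [DistribMulAction R A]
  [Star A] [NonUnitalNonAssocSemiring B] [DistribMulAction R B] [Star B]
  [NonUnitalNonAssocSemiring C] [DistribMulAction R C] [StarAddMonoid C]

def coprodOfMulEqZero (φ : A →⋆ₙₐ[R] C) (ψ : B →⋆ₙₐ[R] C) (hφψ : ∀ a b, φ a * ψ b = 0)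
    (hψφ : ∀ a b, ψ b * φ a = 0) : A × B →⋆ₙₐ[R] C where
  toFun x := φ x.1 + ψ x.2
  map_smul' r x := by simp only [Prod.smul_fst, Prod.smul_snd, map_smul, smul_add,
    MonoidHom.id_apply]
  map_zero' := by simp only [Prod.fst_zero, Prod.snd_zero, map_zero, add_zero]
  map_add' x y := by
    simp only [Prod.fst_add, Prod.snd_add, map_add]
    abel
  map_mul' x y := by
    simp only [Prod.fst_mul, Prod.snd_mul, map_mul, add_mul, mul_add, hφψ, hψφ, add_zero,
      zero_add]
  map_star' x := by simp only [Prod.fst_star, Prod.snd_star, map_star, star_add]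

end NonUnitalStarAlgHom

open ContinuousLinearMapWOT NonUnitalStarAlgHom

section BoundedRankRep

variable {A B : Type*} [NonUnitalNonAssocSemiring A] [DistribMulAction ℂ A] [TopologicalSpace A]
  [NonUnitalNonAssocSemiring B] [DistribMulAction ℂ B] [TopologicalSpace B]

/-- `IsConfig` and `IsConfigProd` are this predicate for `A = C₀(X)` and `A = C₀(X) × C₀(Y)`,
definitionally. -/
def IsBoundedRankRep [Star A] (F : C(A, H →WOT[ℂ] H)) : Prop :=
  ∃ Φ : A →⋆ₙₐ[ℂ] (H →L[ℂ] H), (∀ a, F a = ofCLM (Φ a)) ∧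
    ∃ n : ℕ, ∀ a, (Φ a : H →ₗ[ℂ] H).HasRankLE n

def IsOrthogonalPair (F : C(A, H →WOT[ℂ] H)) (G : C(B, H →WOT[ℂ] H)) : Prop :=
  ∀ a b, toCLM (F a) * toCLM (G b) = 0 ∧ toCLM (G b) * toCLM (F a) = 0 ∧
    star (toCLM (F a)) * toCLM (G b) = 0 ∧ toCLM (F a) * star (toCLM (G b)) = 0

variable {H}

namespace IsBoundedRankRep

section Star

variable [Star A] [Star B] {F : C(A, H →WOT[ℂ] H)}

theorem exists_toCLM_eq (hF : IsBoundedRankRep H F) :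
    ∃ Φ : A →⋆ₙₐ[ℂ] (H →L[ℂ] H), ∀ a, toCLM (F a) = Φ a :=
  let ⟨Φ, hΦ, _⟩ := hF
  ⟨Φ, fun a => by rw [hΦ a, toCLM_ofCLM]⟩

theorem map_zero (hF : IsBoundedRankRep H F) : F 0 = 0 := by
  obtain ⟨Φ, hΦ⟩ := hF.exists_toCLM_eq
  exact toCLM_injective (by rw [hΦ, _root_.map_zero, toCLM_zero])

theorem map_add (hF : IsBoundedRankRep H F) (a b : A) : F (a + b) = F a + F b := by
  obtain ⟨Φ, hΦ⟩ := hF.exists_toCLM_eq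
  exact toCLM_injective (by rw [toCLM_add, hΦ, hΦ, hΦ, _root_.map_add])

theorem toCLM_mul_toCLM_eq_zero (hF : IsBoundedRankRep H F) {a b : A} (hab : a * b = 0) :
    toCLM (F a) * toCLM (F b) = 0 := by
  obtain ⟨Φ, hΦ⟩ := hF.exists_toCLM_eq
  rw [hΦ, hΦ, ← _root_.map_mul, hab, _root_.map_zero]

theorem star_toCLM (hF : IsBoundedRankRep H F) (a : A) :
    star (toCLM (F a)) = toCLM (F (star a)) := by
  obtain ⟨Φ, hΦ⟩ := hF.exists_toCLM_eq
  rw [hΦ, hΦ, map_star]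

theorem comp (hF : IsBoundedRankRep H F) (ψ : B →⋆ₙₐ[ℂ] A) (hψ : Continuous ψ) :
    IsBoundedRankRep H (F.comp ⟨ψ, hψ⟩) :=
  let ⟨Φ, hΦ, n, hn⟩ := hF
  ⟨Φ.comp ψ, fun b => hΦ (ψ b), n, fun b => hn (ψ b)⟩

theorem coprod {G : C(B, H →WOT[ℂ] H)} (hF : IsBoundedRankRep H F) (hG : IsBoundedRankRep H G)
    (hFG : ∀ a b, toCLM (F a) * toCLM (G b) = 0) (hGF : ∀ a b, toCLM (G b) * toCLM (F a) = 0) :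
    IsBoundedRankRep H (F.comp .fst + G.comp .snd) := by
  obtain ⟨Φ, hΦ, m, hm⟩ := hF
  obtain ⟨Ψ, hΨ, n, hn⟩ := hG
  have hΦΨ (a : A) (b : B) : Φ a * Ψ b = 0 := by simpa only [hΦ, hΨ] using hFG a b
  have hΨΦ (a : A) (b : B) : Ψ b * Φ a = 0 := by simpa only [hΦ, hΨ] using hGF a b
  refine ⟨coprodOfMulEqZero Φ Ψ hΦΨ hΨΦ, fun x => ?_, m + n, fun x => (hm x.1).add (hn x.2)⟩
  rw [ContinuousMap.add_apply, ContinuousMap.comp_apply, ContinuousMap.comp_apply, hΦ, hΨ]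
  rfl

end Star

theorem isOrthogonalPair_comp_inl_comp_inr [StarAddMonoid A] [StarAddMonoid B]
    {F : C(A × B, H →WOT[ℂ] H)} (hF : IsBoundedRankRep H F) :
    IsOrthogonalPair H (F.comp ⟨inl ℂ A B, continuous_id.prodMk continuous_const⟩)
      (F.comp ⟨inr ℂ A B, continuous_const.prodMk continuous_id⟩) := by
  intro a b
  simp only [ContinuousMap.comp_apply, hF.star_toCLM]
  refine ⟨?_, ?_, ?_, ?_⟩ <;> exact hF.toCLM_mul_toCLM_eq_zero (by ext <;> simp)

end IsBoundedRankRep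

variable (H A B) in
def prodBoundedRankRepHomeomorph [StarAddMonoid A] [StarAddMonoid B] :
    {F : C(A × B, H →WOT[ℂ] H) // IsBoundedRankRep H F} ≃ₜ
      {p : {F : C(A, H →WOT[ℂ] H) // IsBoundedRankRep H F} ×
          {G : C(B, H →WOT[ℂ] H) // IsBoundedRankRep H G} // IsOrthogonalPair H p.1.1 p.2.1} where
  toFun F := ⟨(⟨_, F.2.comp (inl ℂ A B) (continuous_id.prodMk continuous_const)⟩,
    ⟨_, F.2.comp (inr ℂ A B) (continuous_const.prodMk continuous_id)⟩),
    F.2.isOrthogonalPair_comp_inl_comp_inr⟩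
  invFun p := ⟨_, p.1.1.2.coprod p.1.2.2 (fun a b => (p.2 a b).1) (fun a b => (p.2 a b).2.1)⟩
  left_inv F := by
    refine Subtype.ext (ContinuousMap.ext fun x => ?_)
    show F.1 (x.1, 0) + F.1 (0, x.2) = F.1 x
    rw [← F.2.map_add, Prod.mk_add_mk, add_zero, zero_add]
  right_inv p := by
    refine Subtype.ext (Prod.ext (Subtype.ext (ContinuousMap.ext fun a => ?_))
      (Subtype.ext (ContinuousMap.ext fun b => ?_)))
    · show p.1.1.1 a + p.1.2.1 0 = p.1.1.1 a
      rw [p.1.2.2.map_zero, add_zero]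
    · show p.1.1.1 0 + p.1.2.1 b = p.1.2.1 b
      rw [p.1.1.2.map_zero, zero_add]
  continuous_toFun := by fun_prop
  continuous_invFun := by fun_prop

end BoundedRankRep

theorem stmt10_general
    {X Y : Type*} [TopologicalSpace X] [TopologicalSpace Y] {x₀ : X} {y₀ : Y}
    (H : Type*) [NormedAddCommGroup H] [InnerProductSpace ℂ H] [CompleteSpace H] :
    ∃ h : {F : C(CZero X x₀ × CZero Y y₀, H →WOT[ℂ] H) // IsConfigProd H F} ≃ₜ
        {p : Config H X x₀ × Config H Y y₀ // orthPair H p},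
      (∀ (F : {F : C(CZero X x₀ × CZero Y y₀, H →WOT[ℂ] H) // IsConfigProd H F})
          (f : CZero X x₀), ((h F).1.1).1 f = F.1 (f, 0)) ∧
      (∀ (F : {F : C(CZero X x₀ × CZero Y y₀, H →WOT[ℂ] H) // IsConfigProd H F})
          (g : CZero Y y₀), ((h F).1.2).1 g = F.1 (0, g)) ∧
      (∀ (p : {p : Config H X x₀ × Config H Y y₀ // orthPair H p})
          (fg : CZero X x₀ × CZero Y y₀),
        (h.symm p).1 fg = (p.1.1.1 fg.1) + (p.1.2.1 fg.2)) :=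
  ⟨prodBoundedRankRepHomeomorph H (CZero X x₀) (CZero Y y₀), fun _ _ => rfl, fun _ _ => rfl,
    fun _ _ => rfl⟩

/-- The configuration space of the wedge `X ∨ Y`, i.e. the space of
bounded-rank star homomorphisms on the product algebra `C₀(X) × C₀(Y) ≅ C₀(X ∨ Y)`, is
homeomorphic—via `F ↦ (F(·, 0), F(0, ·))`, with inverse `(F₁, F₂) ↦ ((f, g) ↦ F₁ f + F₂ g)`—to
the subspace of `𝔠(X) × 𝔠(Y)` consisting of the pairs satisfying the mutual orthogonality
conditions. -/
theorem stmt10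
    {X Y : Type*} [TopologicalSpace X] [CompactSpace X] [T2Space X]
    [TopologicalSpace Y] [CompactSpace Y] [T2Space Y] {x₀ : X} {y₀ : Y}
    (H : Type*) [NormedAddCommGroup H] [InnerProductSpace ℂ H] [CompleteSpace H] :
    ∃ h : {F : C(CZero X x₀ × CZero Y y₀, H →WOT[ℂ] H) // IsConfigProd H F} ≃ₜ
        {p : Config H X x₀ × Config H Y y₀ // orthPair H p},
      (∀ (F : {F : C(CZero X x₀ × CZero Y y₀, H →WOT[ℂ] H) // IsConfigProd H F})
          (f : CZero X x₀), ((h F).1.1).1 f = F.1 (f, 0)) ∧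
      (∀ (F : {F : C(CZero X x₀ × CZero Y y₀, H →WOT[ℂ] H) // IsConfigProd H F})
          (g : CZero Y y₀), ((h F).1.2).1 g = F.1 (0, g)) ∧
      (∀ (p : {p : Config H X x₀ × Config H Y y₀ // orthPair H p})
          (fg : CZero X x₀ × CZero Y y₀),
        (h.symm p).1 fg = (p.1.1.1 fg.1) + (p.1.2.1 fg.2)) :=
  stmt10_general H

end
end
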